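/- arXiv:0802.3571 — 4 statements merged into one kernel-verified Lean document; each statement's English description precedes it below -/
import Mathlib

section
/- Let m ≥ 2 be an integer, let β be a real number with 1 < β ≤ 2^{1/m}, and let a₁, a₂ be real numbers with 0 < a₁ < a₂, a₁ > a₂/β and βa₁ > a₂. Then for every integer i with 0 ≤ i ≤ m−1 one has βⁱ(a₂ − a₁) < a₁/β and βⁱ(βa₁ − a₂) < a₁/β; consequently the first m points of the orbits of a₂ − a₁ and of βa₁ − a₂ under the greedy β-transformation T all lie in Δ(0) = [0, a₁/β), and on these points T acts as multiplication by β, i.e. Tⁱ(a₂ − a₁) = βⁱ(a₂ − a₁) and Tⁱ(βa₁ − a₂) = βⁱ(βa₁ − a₂) for 0 ≤ i ≤ m−1. -/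
/-- The greedy β-transformation with deleted digit set `{0, a₁, a₂}`:
`T x = βx` on `Δ(0) = [0, a₁/β)`, `T x = βx − a₁` on `Δ(a₁) = [a₁/β, a₂/β)`,
and `T x = βx − a₂` on `Δ(a₂) = [a₂/β, a₁)`. -/
noncomputable def greedyT (β a₁ a₂ : ℝ) (x : ℝ) : ℝ :=
  if x < a₁ / β then β * x
  else if x < a₂ / β then β * x - a₁
  else β * x - a₂

/-- Let `m ≥ 2` be an integer, `1 < β ≤ 2^(1/m)`, `0 < a₁ < a₂`,
`a₁ > a₂/β` and `β a₁ > a₂`. Then for every `0 ≤ i ≤ m−1`,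
`βⁱ(a₂ − a₁) < a₁/β` and `βⁱ(β a₁ − a₂) < a₁/β`, so the first `m` points of the
orbits of `a₂ − a₁` and `β a₁ − a₂` under `T` lie in `Δ(0) = [0, a₁/β)`, and on
these points `T` acts as multiplication by `β`:
`Tⁱ(a₂ − a₁) = βⁱ(a₂ − a₁)` and `Tⁱ(β a₁ − a₂) = βⁱ(β a₁ − a₂)`. -/
theorem stmt3 (m : ℕ) (hm : 2 ≤ m) (β a₁ a₂ : ℝ)
    (hβ1 : 1 < β) (hβ2 : β ≤ (2 : ℝ) ^ ((1 : ℝ) / m))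
    (ha₁ : 0 < a₁) (h12 : a₁ < a₂) (hgr : a₂ / β < a₁) (hgr' : a₂ < β * a₁) :
    ∀ i < m,
      β ^ i * (a₂ - a₁) < a₁ / β ∧ β ^ i * (β * a₁ - a₂) < a₁ / β ∧
      β ^ i * (a₂ - a₁) ∈ Set.Ico 0 (a₁ / β) ∧
      β ^ i * (β * a₁ - a₂) ∈ Set.Ico 0 (a₁ / β) ∧
      (greedyT β a₁ a₂)^[i] (a₂ - a₁) = β ^ i * (a₂ - a₁) ∧
      (greedyT β a₁ a₂)^[i] (β * a₁ - a₂) = β ^ i * (β * a₁ - a₂) := by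
  have hβ0 : (0:ℝ) < β := by linarith
  have hm0 : (m:ℝ) ≠ 0 := by positivity
  have hβm : β ^ m ≤ 2 := by
    calc β ^ m ≤ ((2:ℝ) ^ ((1:ℝ)/m)) ^ m := pow_le_pow_left₀ hβ0.le hβ2 m
    _ = (2:ℝ) ^ (((1:ℝ)/m) * m) := by
        rw [← Real.rpow_natCast ((2:ℝ) ^ ((1:ℝ)/m)) m, ← Real.rpow_mul (by norm_num)]
    _ = 2 := by rw [one_div, inv_mul_cancel₀ hm0, Real.rpow_one]
  have hβsq : β ^ 2 ≤ 2 := le_trans (pow_le_pow_right₀ hβ1.le hm) hβm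
  have hβ32 : β < 3/2 := by nlinarith
  have key : ∀ i < m, β ^ (i+1) * (β - 1) < 1 := by
    intro i hi
    have h1 : β ^ (i+1) ≤ β ^ m := pow_le_pow_right₀ hβ1.le (by omega)
    nlinarith
  have main : ∀ x, 0 < x → x < (β - 1) * a₁ →
      ∀ i < m, β ^ i * x < a₁ / β ∧ (greedyT β a₁ a₂)^[i] x = β ^ i * x := by
    intro x hx0 hx1
    have hlt : ∀ i < m, β ^ i * x < a₁ / β := by
      intro i hi
      rw [lt_div_iff₀ hβ0]
      have := key i hi
      have hp : 0 < β ^ i := pow_pos hβ0 i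
      have hps : β ^ (i+1) = β ^ i * β := pow_succ β i
      nlinarith [mul_lt_mul_of_pos_left hx1 (mul_pos hp hβ0)]
    intro i
    induction i with
    | zero => intro hi; exact ⟨hlt 0 hi, by simp⟩
    | succ n ih =>
      intro hi
      have hn : n < m := by omega
      refine ⟨hlt _ hi, ?_⟩
      rw [Function.iterate_succ_apply', (ih hn).2, greedyT, if_pos (hlt n hn)]
      ring
  intro i hi
  have hx1 : 0 < a₂ - a₁ := by linarith
  have hx1' : a₂ - a₁ < (β - 1) * a₁ := by nlinarith
  have hy1 : 0 < β * a₁ - a₂ := by linarith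
  have hy1' : β * a₁ - a₂ < (β - 1) * a₁ := by nlinarith
  obtain ⟨h1, h2⟩ := main _ hx1 hx1' i hi
  obtain ⟨h3, h4⟩ := main _ hy1 hy1' i hi
  exact ⟨h1, h3, ⟨mul_nonneg (pow_nonneg hβ0.le i) hx1.le, h1⟩,
    ⟨mul_nonneg (pow_nonneg hβ0.le i) hy1.le, h3⟩, h2, h4⟩
end

section
/- Let w₁ be a word of length p over A and w₂ a word of length q over A such that the fundamental intervals Δ(w₁) and Δ(w₂) are full (of ranks p and q respectively). Then the concatenated word w₁w₂ gives a full fundamental interval of rank p + q, i.e. λ(Δ(w₁w₂)) = a₁/β^{p+q}. -/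
/-!
On a cylinder `Δ(w)` of rank `n`, `Tⁿ` is an affine map `x ↦ βⁿx − c`, and it maps `Δ(w)` into
`[0, a₁)` because `T` leaves `[0, a₁)` invariant. So `Δ(w)` lies in the preimage of `[0, a₁)` under
this affine map, an interval of length `a₁/βⁿ`; when `Δ(w)` is full the two agree up to a null set,
and hence `λ(Δ(w) ∩ T⁻ⁿB) = β⁻ⁿ λ(B)` for every `B ⊆ [0, a₁)`. Apply this with `w = w₁` and
`B = Δ(w₂)`, using `Δ(w₁w₂) = Δ(w₁) ∩ T⁻ᵖΔ(w₂)`.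
-/

open MeasureTheory Set

/-- The interval `Δ(b)` associated to a digit `b ∈ {0, a₁, a₂}`. -/
noncomputable def digitInt (β a₁ a₂ : ℝ) (b : ℝ) : Set ℝ :=
  if b = 0 then Set.Ico 0 (a₁ / β)
  else if b = a₁ then Set.Ico (a₁ / β) (a₂ / β)
  else Set.Ico (a₂ / β) a₁

/-- The fundamental interval `Δ(w) = ⋂_{k < n} T⁻ᵏ Δ(b_k)` of a word
`w = (b₀, …, b_{n−1})`. -/
noncomputable def cyl (β a₁ a₂ : ℝ) (w : List ℝ) : Set ℝ :=
  ⋂ k ∈ Finset.range w.length,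
    (greedyT β a₁ a₂)^[k] ⁻¹' digitInt β a₁ a₂ (w.getD k 0)

/-- `w` is a word over the alphabet `A = {0, a₁, a₂}`. -/
def isWord (a₁ a₂ : ℝ) (w : List ℝ) : Prop := ∀ b ∈ w, b = 0 ∨ b = a₁ ∨ b = a₂

/-- The fundamental interval `Δ(w)` is full: `λ(Δ(w)) = a₁/β^|w|`. -/
def isFull (β a₁ a₂ : ℝ) (w : List ℝ) : Prop :=
  volume (cyl β a₁ a₂ w) = ENNReal.ofReal (a₁ / β ^ w.length)

/-- Condition (6): `a₁ · max (β−1) 1 < a₂ < a₁ · min 2 β`. -/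
def condition6 (β a₁ a₂ : ℝ) : Prop :=
  a₁ * max (β - 1) 1 < a₂ ∧ a₂ < a₁ * min 2 β

/-- `w ∈ Bₙ`: `w` is a word of length `n` over `A` with `λ(Δ(w)) > 0`, `Δ(w)`
non-full, and `Δ(w′)` non-full for every nonempty proper prefix `w′` of `w`. -/
def memB (β a₁ a₂ : ℝ) (n : ℕ) (w : List ℝ) : Prop :=
  w.length = n ∧ isWord a₁ a₂ w ∧ 0 < volume (cyl β a₁ a₂ w) ∧
    ¬ isFull β a₁ a₂ w ∧
    ∀ w' : List ℝ, w' ≠ [] → w' <+: w → w' ≠ w → ¬ isFull β a₁ a₂ w'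

/-- `κ(n)`: the number of elements of `Bₙ`. -/
noncomputable def kappa (β a₁ a₂ : ℝ) (n : ℕ) : ℕ :=
  {w : List ℝ | memB β a₁ a₂ n w}.ncard

lemma volume_preimage_mul_sub {a : ℝ} (ha : 0 < a) (c : ℝ) (s : Set ℝ) :
    volume ((fun x => a * x - c) ⁻¹' s) = ENNReal.ofReal a⁻¹ * volume s := by
  have : (fun x => a * x - c) = (· + -c) ∘ (a * ·) := by ext x; simp [sub_eq_add_neg]
  rw [this, preimage_comp, Real.volume_preimage_mul_left ha.ne', measure_preimage_add_right,
    abs_of_pos (inv_pos.mpr ha)]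

lemma condition6.lt_two_mul {β a₁ a₂ : ℝ} (hc : condition6 β a₁ a₂) (ha₁ : 0 < a₁) :
    a₂ < 2 * a₁ := by
  nlinarith [hc.2, min_le_left 2 β]

lemma condition6.lt_mul {β a₁ a₂ : ℝ} (hc : condition6 β a₁ a₂) (ha₁ : 0 < a₁) :
    a₂ < β * a₁ := by
  nlinarith [hc.2, min_le_right 2 β]

lemma condition6.sub_one_mul_lt {β a₁ a₂ : ℝ} (hc : condition6 β a₁ a₂) (ha₁ : 0 < a₁) :
    (β - 1) * a₁ < a₂ := by
  nlinarith [hc.1, le_max_left (β - 1) 1]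

section GreedyT

variable {β a₁ a₂ : ℝ}

lemma cyl_nil : cyl β a₁ a₂ [] = univ := by
  simp [cyl]

lemma cyl_cons (b : ℝ) (w : List ℝ) :
    cyl β a₁ a₂ (b :: w) = digitInt β a₁ a₂ b ∩ greedyT β a₁ a₂ ⁻¹' cyl β a₁ a₂ w := by
  ext x
  simp only [cyl, mem_iInter, Finset.mem_range, mem_inter_iff, mem_preimage, List.length_cons]
  constructor
  · intro h
    exact ⟨by simpa using h 0 (Nat.succ_pos _), fun k hk => by
      simpa [Function.iterate_succ_apply] using h (k + 1) (Nat.succ_lt_succ hk)⟩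
  · rintro ⟨h0, h1⟩ (_ | k) hk
    · simpa using h0
    · simpa [Function.iterate_succ_apply] using h1 k (Nat.lt_of_succ_lt_succ hk)

lemma cyl_append (u v : List ℝ) :
    cyl β a₁ a₂ (u ++ v) = cyl β a₁ a₂ u ∩ (greedyT β a₁ a₂)^[u.length] ⁻¹' cyl β a₁ a₂ v := by
  induction u with
  | nil => simp [cyl_nil]
  | cons b u ih =>
    rw [List.cons_append, cyl_cons, ih, cyl_cons, List.length_cons, Function.iterate_succ,
      preimage_comp, preimage_inter, inter_assoc]

lemma measurable_greedyT : Measurable (greedyT β a₁ a₂) := by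
  unfold greedyT
  exact Measurable.ite measurableSet_Iio (by fun_prop)
    (Measurable.ite measurableSet_Iio (by fun_prop) (by fun_prop))

lemma measurableSet_cyl (w : List ℝ) : MeasurableSet (cyl β a₁ a₂ w) := by
  refine Finset.measurableSet_biInter _ fun k _ => measurable_greedyT.iterate k ?_
  unfold digitInt
  split_ifs <;> exact measurableSet_Ico

lemma greedyT_mapsTo (hβ : 0 < β) (ha₁ : 0 < a₁) (hc : condition6 β a₁ a₂) :
    MapsTo (greedyT β a₁ a₂) (Ico 0 a₁) (Ico 0 a₁) := by
  rintro x ⟨hx0, hxa⟩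
  have h2 := hc.lt_two_mul ha₁
  have h3 := hc.sub_one_mul_lt ha₁
  unfold greedyT
  split_ifs with h₀ h₁
  · rw [lt_div_iff₀ hβ] at h₀
    exact ⟨by positivity, by linarith⟩
  · rw [not_lt, div_le_iff₀ hβ] at h₀
    rw [lt_div_iff₀ hβ] at h₁
    constructor <;> linarith
  · rw [not_lt, div_le_iff₀ hβ] at h₁
    constructor <;> nlinarith

lemma digitInt_subset_Ico (hβ : 1 < β) (ha₁ : 0 < a₁) (h12 : a₁ < a₂)
    (hc : condition6 β a₁ a₂) {b : ℝ} (hb : b = 0 ∨ b = a₁ ∨ b = a₂) :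
    digitInt β a₁ a₂ b ⊆ Ico 0 a₁ := by
  have hβ0 : 0 < β := by linarith
  rcases hb with hb | hb | hb <;> subst b
  · simpa [digitInt] using Ico_subset_Ico_right (div_le_self ha₁.le hβ.le)
  · simp only [digitInt, ha₁.ne', if_false, if_true]
    refine Ico_subset_Ico (by positivity) ?_
    rw [div_le_iff₀ hβ0]
    linarith [hc.lt_mul ha₁]
  · simp only [digitInt, (ha₁.trans h12).ne', h12.ne', if_false]
    exact Ico_subset_Ico_left (div_nonneg (ha₁.trans h12).le hβ0.le)

lemma greedyT_eqOn_digitInt (hβ : 0 < β) (ha₁ : 0 < a₁) (h12 : a₁ < a₂) {b : ℝ}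
    (hb : b = 0 ∨ b = a₁ ∨ b = a₂) :
    EqOn (greedyT β a₁ a₂) (fun x => β * x - b) (digitInt β a₁ a₂ b) := by
  intro x hx
  rcases hb with hb | hb | hb <;> subst b
  · simp only [digitInt, if_true, mem_Ico] at hx
    simp [greedyT, hx.2]
  · simp only [digitInt, ha₁.ne', if_false, if_true, mem_Ico] at hx
    simp [greedyT, not_lt.mpr hx.1, hx.2]
  · simp only [digitInt, (ha₁.trans h12).ne', h12.ne', if_false, mem_Ico] at hx
    have : a₁ / β ≤ a₂ / β := div_le_div_of_nonneg_right h12.le hβ.le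
    simp [greedyT, not_lt.mpr hx.1, not_lt.mpr (this.trans hx.1)]

lemma cyl_subset_Ico (hβ : 1 < β) (ha₁ : 0 < a₁) (h12 : a₁ < a₂) (hc : condition6 β a₁ a₂)
    {w : List ℝ} (hw : isWord a₁ a₂ w) (hne : w ≠ []) : cyl β a₁ a₂ w ⊆ Ico 0 a₁ := by
  obtain ⟨b, w, rfl⟩ := List.exists_cons_of_ne_nil hne
  rw [cyl_cons]
  exact inter_subset_left.trans (digitInt_subset_Ico hβ ha₁ h12 hc (hw b List.mem_cons_self))

lemma exists_iterate_eqOn_cyl (hβ : 0 < β) (ha₁ : 0 < a₁) (h12 : a₁ < a₂) {w : List ℝ}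
    (hw : isWord a₁ a₂ w) :
    ∃ c, EqOn (greedyT β a₁ a₂)^[w.length] (fun x => β ^ w.length * x - c) (cyl β a₁ a₂ w) := by
  induction w with
  | nil => exact ⟨0, fun x _ => by simp⟩
  | cons b w ih =>
    obtain ⟨hb, hw⟩ := List.forall_mem_cons.mp hw
    obtain ⟨c, hT⟩ := ih hw
    refine ⟨β ^ w.length * b + c, fun x hx => ?_⟩
    rw [cyl_cons] at hx
    rw [List.length_cons, Function.iterate_succ_apply, hT hx.2,
      greedyT_eqOn_digitInt hβ ha₁ h12 hb hx.1, pow_succ]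
    ring

lemma ne_nil_of_isFull {w : List ℝ} (hf : isFull β a₁ a₂ w) : w ≠ [] := by
  rintro rfl
  simp [isFull, cyl_nil] at hf

lemma volume_cyl_inter_preimage_of_isFull (hβ : 1 < β) (ha₁ : 0 < a₁) (h12 : a₁ < a₂)
    (hc : condition6 β a₁ a₂) {w : List ℝ} (hw : isWord a₁ a₂ w) (hf : isFull β a₁ a₂ w)
    {B : Set ℝ} (hB : B ⊆ Ico 0 a₁) :
    volume (cyl β a₁ a₂ w ∩ (greedyT β a₁ a₂)^[w.length] ⁻¹' B) =
      ENNReal.ofReal (β ^ w.length)⁻¹ * volume B := by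
  have hβ0 : 0 < β := by linarith
  have hβn : 0 < β ^ w.length := by positivity
  obtain ⟨c, hT⟩ := exists_iterate_eqOn_cyl hβ0 ha₁ h12 hw
  set f := fun x => β ^ w.length * x - c
  have hmaps : MapsTo f (cyl β a₁ a₂ w) (Ico 0 a₁) :=
    (((greedyT_mapsTo hβ0 ha₁ hc).iterate _).mono_left
      (cyl_subset_Ico hβ ha₁ h12 hc hw (ne_nil_of_isFull hf))).congr hT
  have hvol : volume (f ⁻¹' Ico 0 a₁) = volume (cyl β a₁ a₂ w) := by
    rw [volume_preimage_mul_sub hβn, Real.volume_Ico, sub_zero, hf,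
      ← ENNReal.ofReal_mul (by positivity)]
    congr 1
    field_simp
  have hae : cyl β a₁ a₂ w =ᵐ[volume] f ⁻¹' Ico 0 a₁ :=
    ae_eq_of_subset_of_measure_ge hmaps hvol.le (measurableSet_cyl w).nullMeasurableSet
      (by rw [hvol, hf]; exact ENNReal.ofReal_ne_top)
  calc volume (cyl β a₁ a₂ w ∩ (greedyT β a₁ a₂)^[w.length] ⁻¹' B)
      = volume (cyl β a₁ a₂ w ∩ f ⁻¹' B) := by rw [hT.inter_preimage_eq]
    _ = volume (f ⁻¹' Ico 0 a₁ ∩ f ⁻¹' B) := measure_congr (ae_eq_set_inter hae (ae_eq_refl _))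
    _ = volume (f ⁻¹' B) := by rw [← preimage_inter, inter_eq_right.mpr hB]
    _ = ENNReal.ofReal (β ^ w.length)⁻¹ * volume B := volume_preimage_mul_sub hβn c B

end GreedyT

theorem stmt4_general (β a₁ a₂ : ℝ) (hβ1 : 1 < β)
    (ha₁ : 0 < a₁) (h12 : a₁ < a₂) (hc : condition6 β a₁ a₂)
    (p q : ℕ) (w₁ w₂ : List ℝ) (hw₁ : isWord a₁ a₂ w₁) (hw₂ : isWord a₁ a₂ w₂)
    (hl₁ : w₁.length = p) (hl₂ : w₂.length = q)
    (hf₁ : isFull β a₁ a₂ w₁) (hf₂ : isFull β a₁ a₂ w₂) :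
    volume (cyl β a₁ a₂ (w₁ ++ w₂)) = ENNReal.ofReal (a₁ / β ^ (p + q)) := by
  subst hl₁ hl₂
  have hw₂_sub := cyl_subset_Ico hβ1 ha₁ h12 hc hw₂ (ne_nil_of_isFull hf₂)
  rw [cyl_append, volume_cyl_inter_preimage_of_isFull hβ1 ha₁ h12 hc hw₁ hf₁ hw₂_sub, hf₂,
    ← ENNReal.ofReal_mul (by positivity), pow_add]
  congr 1
  field_simp

/-- If `Δ(w₁)` and `Δ(w₂)` are full fundamental intervals of ranks
`p` and `q`, then the concatenated word `w₁w₂` gives a full fundamental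
interval of rank `p + q`, i.e. `λ(Δ(w₁w₂)) = a₁/β^(p+q)`. -/
theorem stmt4 (β a₁ a₂ : ℝ) (hβ1 : 1 < β) (hβ3 : β < 3)
    (ha₁ : 0 < a₁) (h12 : a₁ < a₂) (hc : condition6 β a₁ a₂)
    (p q : ℕ) (w₁ w₂ : List ℝ) (hw₁ : isWord a₁ a₂ w₁) (hw₂ : isWord a₁ a₂ w₂)
    (hl₁ : w₁.length = p) (hl₂ : w₂.length = q)
    (hf₁ : isFull β a₁ a₂ w₁) (hf₂ : isFull β a₁ a₂ w₂) :
    volume (cyl β a₁ a₂ (w₁ ++ w₂)) = ENNReal.ofReal (a₁ / β ^ (p + q)) :=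
  stmt4_general β a₁ a₂ hβ1 ha₁ h12 hc p q w₁ w₂ hw₁ hw₂ hl₁ hl₂ hf₁ hf₂
end

section
/- Let m ≥ 2 be an integer and assume moreover that 2^{1/(m+1)} < β ≤ 2^{1/m}. Then for every n ≥ 1 one has κ(n) ≤ 2^{⌊n/m⌋+1}. -/
open MeasureTheory Set

/-!
For a nonempty word `w` the cylinder `Δ(w)` is an interval whose scaled length
`c(w) = β^|w| λ(Δ(w))` obeys `c(wd) = min (β c(w)) d⁺ - d`, where `d⁺` is the digit after `d`
(and `β a₁` after `a₂`); `Δ(w)` is full exactly when `c(w) = a₁`. Hence a word of `B_k` has at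
most one continuation in `B_{k+1}` when `β c(w) ≤ a₂`, and otherwise only the two continuations
by `a₁` and `a₂`. Their states are at most `a₂ - a₁` and `β a₁ - a₂`, and `β^m ≤ 2`, `β ≤ 3/2`
turn this into `β^m c ≤ a₂`: neither can branch during the next `m` steps. So the tree of the
sets `B_k` branches at most once every `m` levels.
-/

namespace GreedyDeletedDigits

theorem eq_zero_of_pow_mul_le_of_lt_mul {β c a : ℝ} {j : ℕ} (hβ : 1 ≤ β) (ha : 0 ≤ a)
    (hj : β ^ j * c ≤ a) (hlt : a < β * c) : j = 0 := by
  by_contra hj0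
  have hc : 0 < c := pos_of_mul_pos_right (ha.trans_lt hlt) (zero_le_one.trans hβ)
  have : β * c ≤ β ^ j * c := by gcongr; exact le_self_pow₀ hβ hj0
  linarith

structure Admissible (β a₁ a₂ : ℝ) : Prop where
  one_lt : 1 < β
  a₁_pos : 0 < a₁
  a₁_lt_a₂ : a₁ < a₂
  a₂_le_two_mul : a₂ ≤ 2 * a₁
  a₂_le_mul : a₂ ≤ β * a₁
  mul_le_add : β * a₁ ≤ a₁ + a₂

variable {β a₁ a₂ : ℝ}

theorem Admissible.of_condition6 (hβ : 1 < β) (ha₁ : 0 < a₁) (hc : condition6 β a₁ a₂) :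
    Admissible β a₁ a₂ := by
  obtain ⟨hlo, hhi⟩ := hc
  have hmax : a₁ * (β - 1) ≤ a₁ * max (β - 1) 1 ∧ a₁ * 1 ≤ a₁ * max (β - 1) 1 :=
    ⟨by gcongr; exact le_max_left _ _, by gcongr; exact le_max_right _ _⟩
  have hmin : a₁ * min 2 β ≤ a₁ * 2 ∧ a₁ * min 2 β ≤ a₁ * β :=
    ⟨by gcongr; exact min_le_left _ _, by gcongr; exact min_le_right _ _⟩
  exact ⟨hβ, ha₁, by linarith, by linarith, by linarith, by linarith⟩

namespace Admissible

variable (h : Admissible β a₁ a₂)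
include h

theorem β_pos : 0 < β := zero_lt_one.trans h.one_lt

theorem a₂_pos : 0 < a₂ := h.a₁_pos.trans h.a₁_lt_a₂

end Admissible

def IsDigit (a₁ a₂ b : ℝ) : Prop := b = 0 ∨ b = a₁ ∨ b = a₂

theorem IsDigit.nonneg (h : Admissible β a₁ a₂) {b : ℝ} (hb : IsDigit a₁ a₂ b) : 0 ≤ b := by
  rcases hb with rfl | rfl | rfl
  exacts [le_rfl, h.a₁_pos.le, h.a₂_pos.le]

/-- `Δ(b) = [b/β, nextDigit b/β)`: the digit following `b`, with `β a₁` after the last one. -/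
noncomputable def nextDigit (β a₁ a₂ b : ℝ) : ℝ :=
  if b = 0 then a₁ else if b = a₁ then a₂ else β * a₁

theorem nextDigit_zero : nextDigit β a₁ a₂ 0 = a₁ := by simp [nextDigit]

section Digits

variable (h : Admissible β a₁ a₂)
include h

theorem nextDigit_a₁ : nextDigit β a₁ a₂ a₁ = a₂ := by simp [nextDigit, h.a₁_pos.ne']

theorem nextDigit_a₂ : nextDigit β a₁ a₂ a₂ = β * a₁ := by
  simp [nextDigit, h.a₂_pos.ne', h.a₁_lt_a₂.ne']

theorem digitInt_eq_Ico {b : ℝ} (hb : IsDigit a₁ a₂ b) :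
    digitInt β a₁ a₂ b = Ico (b / β) (nextDigit β a₁ a₂ b / β) := by
  rcases hb with rfl | rfl | rfl
  · simp [digitInt, nextDigit_zero]
  · simp [digitInt, nextDigit_a₁ h, h.a₁_pos.ne']
  · simp [digitInt, nextDigit_a₂ h, h.a₂_pos.ne', h.a₁_lt_a₂.ne', h.β_pos.ne']

/-- `T` maps every digit interval into `[0, a₁)`. -/
theorem nextDigit_sub_le {b : ℝ} (hb : IsDigit a₁ a₂ b) : nextDigit β a₁ a₂ b - b ≤ a₁ := by
  rcases hb with rfl | rfl | rfl
  · simp [nextDigit_zero]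
  · linarith [nextDigit_a₁ h, h.a₂_le_two_mul]
  · linarith [nextDigit_a₂ h, h.mul_le_add]

theorem nextDigit_le_mul {b : ℝ} (hb : IsDigit a₁ a₂ b) : nextDigit β a₁ a₂ b ≤ β * a₁ := by
  rcases hb with rfl | rfl | rfl
  · rw [nextDigit_zero]; nlinarith [h.one_lt, h.a₁_pos]
  · rw [nextDigit_a₁ h]; exact h.a₂_le_mul
  · rw [nextDigit_a₂ h]

theorem greedyT_eq {b x : ℝ} (hb : IsDigit a₁ a₂ b) (hx : x ∈ digitInt β a₁ a₂ b) :
    greedyT β a₁ a₂ x = β * x - b := by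
  rw [digitInt_eq_Ico h hb] at hx
  obtain ⟨hx₁, hx₂⟩ := hx
  have hdiv : a₁ / β ≤ a₂ / β := div_le_div_of_nonneg_right h.a₁_lt_a₂.le h.β_pos.le
  rcases hb with rfl | rfl | rfl
  · rw [nextDigit_zero] at hx₂
    simp [greedyT, hx₂]
  · rw [nextDigit_a₁ h] at hx₂
    simp [greedyT, not_lt.2 hx₁, hx₂]
  · simp [greedyT, not_lt.2 hx₁, not_lt.2 (hdiv.trans hx₁)]

end Digits

theorem cyl_nil : cyl β a₁ a₂ [] = univ := by simp [cyl]

theorem cyl_cons (b : ℝ) (t : List ℝ) :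
    cyl β a₁ a₂ (b :: t) = digitInt β a₁ a₂ b ∩ greedyT β a₁ a₂ ⁻¹' cyl β a₁ a₂ t := by
  ext x
  simp only [cyl, mem_iInter, Finset.mem_range, List.length_cons, mem_inter_iff, mem_preimage]
  constructor
  · intro hx
    exact ⟨by simpa using hx 0 (by omega),
      fun k hk => by simpa [Function.iterate_succ_apply] using hx (k + 1) (by omega)⟩
  · rintro ⟨h₀, hT⟩ (_ | k) hk
    · simpa using h₀
    · simpa [Function.iterate_succ_apply] using hT k (by omega)

theorem cyl_antitone {u v : List ℝ} (huv : u <+: v) : cyl β a₁ a₂ v ⊆ cyl β a₁ a₂ u := by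
  obtain ⟨t, rfl⟩ := huv
  simp only [cyl, subset_def, mem_iInter, Finset.mem_range, List.length_append]
  intro x hx k hk
  rw [← List.getD_append _ _ _ _ hk]
  exact hx k (by omega)

/-- Endpoints of `cyl w` for nonempty `w`; on `[]` they describe `[0, a₁)`, although
`cyl [] = univ`. -/
noncomputable def cylLeft (β : ℝ) : List ℝ → ℝ
  | [] => 0
  | b :: t => (b + cylLeft β t) / β

noncomputable def cylRight (β a₁ a₂ : ℝ) : List ℝ → ℝ
  | [] => a₁
  | b :: t => min ((b + cylRight β a₁ a₂ t) / β) (nextDigit β a₁ a₂ b / β)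

/-- `β^|w| λ(Δ(w))`, so that `Δ(w)` is full exactly when `scaledLength w = a₁`. -/
noncomputable def scaledLength (β a₁ a₂ : ℝ) (w : List ℝ) : ℝ :=
  β ^ w.length * (cylRight β a₁ a₂ w - cylLeft β w)

theorem cylLeft_append (hβ : β ≠ 0) (w : List ℝ) (d : ℝ) :
    cylLeft β (w ++ [d]) = cylLeft β w + d / β ^ (w.length + 1) := by
  induction w with
  | nil => simp [cylLeft]
  | cons b t ih =>
    simp only [List.cons_append, cylLeft, ih, List.length_cons]
    field_simp
    ring

section Cylinders

variable (h : Admissible β a₁ a₂)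
include h

theorem cylLeft_nonneg {w : List ℝ} (hw : isWord a₁ a₂ w) : 0 ≤ cylLeft β w := by
  induction w with
  | nil => simp [cylLeft]
  | cons b t ih =>
    have hb := IsDigit.nonneg h (hw b List.mem_cons_self)
    have ht := ih fun x hx => hw x (List.mem_cons_of_mem _ hx)
    exact div_nonneg (by linarith) h.β_pos.le

theorem cylRight_singleton {b : ℝ} (hb : IsDigit a₁ a₂ b) :
    cylRight β a₁ a₂ [b] = nextDigit β a₁ a₂ b / β := by
  rw [cylRight, cylRight]
  refine min_eq_right (div_le_div_of_nonneg_right ?_ h.β_pos.le)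
  linarith [nextDigit_sub_le h hb]

theorem digitInt_inter_preimage_Ico {b l r : ℝ} (hb : IsDigit a₁ a₂ b) (hl : 0 ≤ l) :
    digitInt β a₁ a₂ b ∩ greedyT β a₁ a₂ ⁻¹' Ico l r =
      Ico ((b + l) / β) (min ((b + r) / β) (nextDigit β a₁ a₂ b / β)) := by
  have hβ := h.β_pos
  ext x
  constructor
  · rintro ⟨hx, hTx⟩
    have hx' := hx
    rw [digitInt_eq_Ico h hb] at hx'
    rw [mem_preimage, greedyT_eq h hb hx, mem_Ico] at hTx
    refine ⟨by rw [div_le_iff₀ hβ]; linarith, lt_min (by rw [lt_div_iff₀ hβ]; linarith) hx'.2⟩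
  · rintro ⟨hx₁, hx₂⟩
    rw [div_le_iff₀ hβ] at hx₁
    rw [lt_min_iff, lt_div_iff₀ hβ] at hx₂
    have hx : x ∈ digitInt β a₁ a₂ b := by
      rw [digitInt_eq_Ico h hb]
      exact ⟨by rw [div_le_iff₀ hβ]; linarith, hx₂.2⟩
    refine ⟨hx, ?_⟩
    rw [mem_preimage, greedyT_eq h hb hx]
    exact ⟨by linarith, by linarith⟩

theorem cyl_eq_Ico {w : List ℝ} (hw : isWord a₁ a₂ w) (hne : w ≠ []) :
    cyl β a₁ a₂ w = Ico (cylLeft β w) (cylRight β a₁ a₂ w) := by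
  induction w with
  | nil => exact absurd rfl hne
  | cons b t ih =>
    have hb : IsDigit a₁ a₂ b := hw b List.mem_cons_self
    have ht : isWord a₁ a₂ t := fun x hx => hw x (List.mem_cons_of_mem _ hx)
    rcases eq_or_ne t [] with rfl | htne
    · rw [cylRight_singleton h hb, cyl_cons, cyl_nil, preimage_univ, inter_univ,
        digitInt_eq_Ico h hb]
      simp [cylLeft]
    · rw [cyl_cons, ih ht htne, digitInt_inter_preimage_Ico h hb (cylLeft_nonneg h ht)]
      rfl

theorem cylRight_append (w : List ℝ) {d : ℝ} (hd : IsDigit a₁ a₂ d) :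
    cylRight β a₁ a₂ (w ++ [d]) =
      min (cylRight β a₁ a₂ w) (cylLeft β w + nextDigit β a₁ a₂ d / β ^ (w.length + 1)) := by
  have hβ := h.β_pos
  induction w with
  | nil =>
    rw [List.nil_append, cylRight_singleton h hd, cylRight, cylLeft, List.length_nil, zero_add,
      zero_add, pow_one, min_eq_right ((div_le_iff₀ hβ).2 (by linarith [nextDigit_le_mul h hd]))]
  | cons b t ih =>
    simp only [List.cons_append, cylRight, ih, cylLeft, List.length_cons]
    rw [← min_add_add_left, ← min_div_div_right hβ.le, min_right_comm]
    congr 3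
    field_simp
    ring

theorem scaledLength_append (w : List ℝ) {d : ℝ} (hd : IsDigit a₁ a₂ d) :
    scaledLength β a₁ a₂ (w ++ [d]) =
      min (β * scaledLength β a₁ a₂ w) (nextDigit β a₁ a₂ d) - d := by
  have hP : 0 < β ^ (w.length + 1) := pow_pos h.β_pos _
  rw [scaledLength, scaledLength, cylRight_append h w hd, cylLeft_append h.β_pos.ne',
    List.length_append, List.length_singleton, ← sub_sub, ← min_sub_sub_right, add_sub_cancel_left,
    mul_sub, mul_min_of_nonneg _ _ hP.le, mul_div_cancel₀ _ hP.ne', mul_div_cancel₀ _ hP.ne',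
    pow_succ', mul_assoc]

theorem scaledLength_append_le_mul_sub (w : List ℝ) {d : ℝ} (hd : IsDigit a₁ a₂ d) :
    scaledLength β a₁ a₂ (w ++ [d]) ≤ β * scaledLength β a₁ a₂ w - d := by
  rw [scaledLength_append h w hd]
  exact sub_le_sub_right (min_le_left _ _) d

theorem pow_mul_scaledLength_append_le {m : ℕ} (w : List ℝ) {d : ℝ} (hd : IsDigit a₁ a₂ d)
    (hstay : β ^ m * (nextDigit β a₁ a₂ d - d) ≤ a₂) :
    β ^ m * scaledLength β a₁ a₂ (w ++ [d]) ≤ a₂ := by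
  refine le_trans (mul_le_mul_of_nonneg_left ?_ (pow_nonneg h.β_pos.le m)) hstay
  rw [scaledLength_append h w hd]
  exact sub_le_sub_right (min_le_right _ _) d

end Cylinders

theorem scaledLength_nil : scaledLength β a₁ a₂ [] = a₁ := by
  simp [scaledLength, cylRight, cylLeft]

theorem volume_pos_and_not_isFull_of_prefix {n : ℕ} {u v : List ℝ} (hv : memB β a₁ a₂ n v)
    (huv : u <+: v) (hu : u ≠ []) : 0 < volume (cyl β a₁ a₂ u) ∧ ¬ isFull β a₁ a₂ u := by
  obtain ⟨-, -, hvol, hnf, hpre⟩ := hv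
  refine ⟨hvol.trans_le (measure_mono (cyl_antitone huv)), ?_⟩
  rcases eq_or_ne u v with rfl | hne
  · exact hnf
  · exact hpre u hu huv hne

def descendants (β a₁ a₂ : ℝ) (k : ℕ) (w : List ℝ) : Set (List ℝ) :=
  {v | memB β a₁ a₂ (w.length + k) v ∧ w <+: v}

theorem descendants_nil (n : ℕ) : descendants β a₁ a₂ n [] = {w | memB β a₁ a₂ n w} := by
  ext v
  simp [descendants]

theorem encard_descendants_zero_le (w : List ℝ) : (descendants β a₁ a₂ 0 w).encard ≤ 1 := by
  rw [encard_le_one_iff]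
  rintro u v ⟨hu, hwu⟩ ⟨hv, hwv⟩
  rw [← hwu.eq_of_length hu.1.symm, ← hwv.eq_of_length hv.1.symm]

theorem descendants_succ_subset (k : ℕ) (w : List ℝ) :
    descendants β a₁ a₂ (k + 1) w ⊆ descendants β a₁ a₂ k (w ++ [0]) ∪
      descendants β a₁ a₂ k (w ++ [a₁]) ∪ descendants β a₁ a₂ k (w ++ [a₂]) := by
  rintro v ⟨hv, t, rfl⟩
  rcases t with _ | ⟨d, t⟩
  · simpa using hv.1
  · have hmem : w ++ d :: t ∈ descendants β a₁ a₂ k (w ++ [d]) :=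
      ⟨by rw [List.length_append, List.length_singleton, Nat.add_right_comm]; exact hv, t, by simp⟩
    rcases hv.2.1 d (by simp) with rfl | rfl | rfl <;> simp [hmem]

section Counting

variable (h : Admissible β a₁ a₂)
include h

theorem scaledLength_pos_and_ne {w : List ℝ} (hw : isWord a₁ a₂ w) (hne : w ≠ [])
    (hvol : 0 < volume (cyl β a₁ a₂ w)) (hnf : ¬ isFull β a₁ a₂ w) :
    0 < scaledLength β a₁ a₂ w ∧ scaledLength β a₁ a₂ w ≠ a₁ := by
  have hP : 0 < β ^ w.length := pow_pos h.β_pos _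
  have hvol_eq :
      volume (cyl β a₁ a₂ w) = ENNReal.ofReal (scaledLength β a₁ a₂ w / β ^ w.length) := by
    rw [cyl_eq_Ico h hw hne, Real.volume_Ico, scaledLength, mul_div_cancel_left₀ _ hP.ne']
  rw [hvol_eq, ENNReal.ofReal_pos, div_pos_iff_of_pos_right hP] at hvol
  refine ⟨hvol, fun hc => hnf ?_⟩
  rw [isFull, hvol_eq, hc]

theorem scaledLength_append_of_nonempty {k : ℕ} {w : List ℝ} {d : ℝ}
    (hne : (descendants β a₁ a₂ k (w ++ [d])).Nonempty) :
    0 < scaledLength β a₁ a₂ (w ++ [d]) ∧ scaledLength β a₁ a₂ (w ++ [d]) ≠ a₁ := by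
  obtain ⟨v, hv, hpre⟩ := hne
  obtain ⟨hvol, hnf⟩ := volume_pos_and_not_isFull_of_prefix hv hpre (by simp)
  exact scaledLength_pos_and_ne h (fun b hb => hv.2.1 b (hpre.subset hb)) (by simp) hvol hnf

theorem descendants_append_zero_eq_empty (k : ℕ) {w : List ℝ}
    (hc : a₁ ≤ β * scaledLength β a₁ a₂ w) : descendants β a₁ a₂ k (w ++ [0]) = ∅ := by
  refine eq_empty_iff_forall_notMem.2 fun v hv => ?_
  refine (scaledLength_append_of_nonempty h ⟨v, hv⟩).2 ?_
  rw [scaledLength_append h w (Or.inl rfl), nextDigit_zero, min_eq_right hc, sub_zero]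

theorem descendants_append_eq_empty (k : ℕ) {w : List ℝ} {d : ℝ} (hd : IsDigit a₁ a₂ d)
    (hc : β * scaledLength β a₁ a₂ w ≤ d) : descendants β a₁ a₂ k (w ++ [d]) = ∅ := by
  refine eq_empty_iff_forall_notMem.2 fun v hv => ?_
  linarith [(scaledLength_append_of_nonempty h ⟨v, hv⟩).1, scaledLength_append_le_mul_sub h w hd]

theorem descendants_succ_subset_of_le (k : ℕ) {w : List ℝ}
    (hc : β * scaledLength β a₁ a₂ w ≤ a₂) :
    ∃ d, IsDigit a₁ a₂ d ∧ descendants β a₁ a₂ (k + 1) w ⊆ descendants β a₁ a₂ k (w ++ [d]) := by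
  have hsub := descendants_succ_subset (β := β) (a₁ := a₁) (a₂ := a₂) k w
  rw [descendants_append_eq_empty h k (Or.inr (Or.inr rfl)) hc, union_empty] at hsub
  rcases lt_or_ge (β * scaledLength β a₁ a₂ w) a₁ with h₁ | h₁
  · rw [descendants_append_eq_empty h k (Or.inr (Or.inl rfl)) h₁.le, union_empty] at hsub
    exact ⟨0, Or.inl rfl, hsub⟩
  · rw [descendants_append_zero_eq_empty h k h₁, empty_union] at hsub
    exact ⟨a₁, Or.inr (Or.inl rfl), hsub⟩

theorem descendants_succ_subset_of_lt (k : ℕ) {w : List ℝ}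
    (hc : a₂ < β * scaledLength β a₁ a₂ w) :
    descendants β a₁ a₂ (k + 1) w ⊆
      descendants β a₁ a₂ k (w ++ [a₁]) ∪ descendants β a₁ a₂ k (w ++ [a₂]) := by
  have hsub := descendants_succ_subset (β := β) (a₁ := a₁) (a₂ := a₂) k w
  rwa [descendants_append_zero_eq_empty h k (by linarith [h.a₁_lt_a₂]), empty_union] at hsub

/-- After a branching the two new states need `m` more steps before they can branch again, so the
exponent `(k + m - j) / m` counts the branchings available within the next `k` steps. -/
theorem encard_descendants_le {m : ℕ} (hm : 0 < m) (hstay₁ : β ^ m * (a₂ - a₁) ≤ a₂)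
    (hstay₂ : β ^ m * (β * a₁ - a₂) ≤ a₂) (k : ℕ) :
    ∀ (w : List ℝ) (j : ℕ), β ^ j * scaledLength β a₁ a₂ w ≤ a₂ →
      (descendants β a₁ a₂ k w).encard ≤ 2 ^ ((k + m - j) / m) := by
  induction k with
  | zero => exact fun w _ _ => (encard_descendants_zero_le w).trans (one_le_pow₀ one_le_two)
  | succ k ih =>
    intro w j hj
    set c := scaledLength β a₁ a₂ w
    rcases le_or_gt (β * c) a₂ with hle | hlt
    · obtain ⟨d, hd, hsub⟩ := descendants_succ_subset_of_le h k hle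
      have hc' : scaledLength β a₁ a₂ (w ++ [d]) ≤ β * c := by
        linarith [scaledLength_append_le_mul_sub h w hd, IsDigit.nonneg h hd]
      have hj' : β ^ (j - 1) * scaledLength β a₁ a₂ (w ++ [d]) ≤ a₂ := by
        rcases j with _ | i
        · simpa using hc'.trans hle
        · calc β ^ i * scaledLength β a₁ a₂ (w ++ [d]) ≤ β ^ i * (β * c) := by
                gcongr; exact pow_nonneg h.β_pos.le i
            _ = β ^ (i + 1) * c := by ring
            _ ≤ a₂ := hj
      calc (descendants β a₁ a₂ (k + 1) w).encard ≤ (descendants β a₁ a₂ k (w ++ [d])).encard :=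
            encard_le_encard hsub
        _ ≤ 2 ^ ((k + m - (j - 1)) / m) := ih _ _ hj'
        _ ≤ 2 ^ ((k + 1 + m - j) / m) :=
            pow_le_pow_right₀ one_le_two (Nat.div_le_div_right (by omega))
    · obtain rfl : j = 0 := eq_zero_of_pow_mul_le_of_lt_mul h.one_lt.le h.a₂_pos.le hj hlt
      have h₁ := ih _ _ (pow_mul_scaledLength_append_le h w (Or.inr (Or.inl rfl))
        (by rwa [nextDigit_a₁ h]))
      have h₂ := ih _ _ (pow_mul_scaledLength_append_le h w (Or.inr (Or.inr rfl))
        (by rwa [nextDigit_a₂ h]))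
      rw [Nat.add_sub_cancel] at h₁ h₂
      calc (descendants β a₁ a₂ (k + 1) w).encard
          ≤ (descendants β a₁ a₂ k (w ++ [a₁]) ∪ descendants β a₁ a₂ k (w ++ [a₂])).encard :=
            encard_le_encard (descendants_succ_subset_of_lt h k hlt)
        _ ≤ 2 ^ (k / m) + 2 ^ (k / m) := (encard_union_le _ _).trans (add_le_add h₁ h₂)
        _ = 2 ^ ((k + m) / m) := by rw [← two_mul, ← pow_succ', Nat.add_div_right k hm]
        _ ≤ 2 ^ ((k + 1 + m - 0) / m) :=
            pow_le_pow_right₀ one_le_two (Nat.div_le_div_right (by omega))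

theorem kappa_le {m : ℕ} (hm : 0 < m) (hstay₁ : β ^ m * (a₂ - a₁) ≤ a₂)
    (hstay₂ : β ^ m * (β * a₁ - a₂) ≤ a₂) (n : ℕ) : kappa β a₁ a₂ n ≤ 2 ^ (n / m + 1) := by
  have hroot : β ^ 0 * scaledLength β a₁ a₂ [] ≤ a₂ := by
    simpa [scaledLength_nil] using h.a₁_lt_a₂.le
  have hB := encard_descendants_le h hm hstay₁ hstay₂ n [] 0 hroot
  rw [descendants_nil, Nat.sub_zero, Nat.add_div_right n hm] at hB
  exact (encard_le_coe_iff_finite_ncard_le.1 (by exact_mod_cast hB)).2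

end Counting

end GreedyDeletedDigits

theorem stmt8_general (β a₁ a₂ : ℝ) (hβ1 : 1 < β)
    (ha₁ : 0 < a₁) (hc : condition6 β a₁ a₂)
    (m : ℕ) (hm : 2 ≤ m)
    (hβhi : β ≤ (2 : ℝ) ^ ((1 : ℝ) / m)) :
    ∀ n : ℕ, 1 ≤ n → kappa β a₁ a₂ n ≤ 2 ^ (n / m + 1) := by
  intro n _
  have h := GreedyDeletedDigits.Admissible.of_condition6 hβ1 ha₁ hc
  have hβm : β ^ m ≤ 2 := by
    calc β ^ m ≤ ((2 : ℝ) ^ ((m : ℝ)⁻¹)) ^ m :=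
          pow_le_pow_left₀ h.β_pos.le (by rwa [one_div] at hβhi) m
      _ = 2 := Real.rpow_inv_natCast_pow zero_le_two (by omega)
  have hβ : β ≤ 3 / 2 := by
    nlinarith [hβm.trans' (pow_le_pow_right₀ hβ1.le hm)]
  refine GreedyDeletedDigits.kappa_le h (by omega) ?_ ?_ n
  · nlinarith [h.a₁_lt_a₂, h.a₂_le_two_mul]
  · nlinarith [h.a₁_lt_a₂, h.a₂_le_mul, h.a₁_pos]

/-- Let `m ≥ 2` be an integer and assume moreover that
`2^(1/(m+1)) < β ≤ 2^(1/m)`. Then for every `n ≥ 1` one has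
`κ(n) ≤ 2^(⌊n/m⌋+1)`. -/
theorem stmt8 (β a₁ a₂ : ℝ) (hβ1 : 1 < β) (hβ3 : β < 3)
    (ha₁ : 0 < a₁) (h12 : a₁ < a₂) (hc : condition6 β a₁ a₂)
    (m : ℕ) (hm : 2 ≤ m)
    (hβlo : (2 : ℝ) ^ ((1 : ℝ) / (m + 1)) < β)
    (hβhi : β ≤ (2 : ℝ) ^ ((1 : ℝ) / m)) :
    ∀ n : ℕ, 1 ≤ n → kappa β a₁ a₂ n ≤ 2 ^ (n / m + 1) :=
  stmt8_general β a₁ a₂ hβ1 ha₁ hc m hm hβhi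
end

section
/- The sequence κ(n)/βⁿ tends to 0 as n → ∞. -/
open MeasureTheory Set

/-!
Reading a digit maps the interval `[0, c)` affinely onto another interval `[0, c')`, so the words
counted by `κ` on `[0, c)` satisfy `κ_c(n+1) ≤ κ_{g c}(n) + [a₂/β < c] κ_{a₂-a₁}(n)`, where `g` is a
β-transformation acting on the endpoint `c`. Unrolling along the orbit of `c` gives
`κ_c(n)/βⁿ ≤ β⁻ⁿ + ∑ₜ wₜ(c) u(n-1-t)` with `u(m) = κ_{a₂-a₁}(m)/βᵐ`. The weight `wₜ(c)` is
`β^-(t+1)` exactly at the digits `a₂` of the expansion `c = ∑ₜ dₜ β^-(t+1)`, so the weights sum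
to at most `c/a₂ ≤ a₁/a₂ < 1`. A renewal inequality `u ≤ r + w ⋆ u` with `r → 0` and total
weight `< 1` forces `u → 0`, and then `κ(n)/βⁿ = κ_{a₁}(n)/βⁿ → 0` as well.
-/

open Filter Topology

section Renewal

open Finset

noncomputable def shiftedConv (w u : ℕ → ℝ) (n : ℕ) : ℝ :=
  ∑ t ∈ range n, w t * u (n - 1 - t)

variable {w u x r : ℕ → ℝ} {q : ℝ}

lemma Finset.sum_mul_le_sum_mul_of_le {ι : Type*} {s : Finset ι} {w v : ι → ℝ} {B : ℝ}
    (hw : ∀ t ∈ s, 0 ≤ w t) (hv : ∀ t ∈ s, v t ≤ B) :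
    ∑ t ∈ s, w t * v t ≤ (∑ t ∈ s, w t) * B := by
  rw [sum_mul]
  exact sum_le_sum fun t ht => mul_le_mul_of_nonneg_left (hv t ht) (hw t ht)

lemma tendsto_zero_of_nonneg_of_eventually_le (h0 : 0 ≤ u)
    (h : ∀ ε > 0, ∀ᶠ n in atTop, u n ≤ ε) : Tendsto u atTop (𝓝 0) :=
  tendsto_order.2 ⟨fun _ ha => Eventually.of_forall fun n => ha.trans_le (h0 n),
    fun _ ha => (h _ (half_pos ha)).mono fun _ hn => hn.trans_lt (half_lt_self ha)⟩

lemma le_div_one_sub_of_le_add_shiftedConv_self (hw : 0 ≤ w)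
    (hwq : ∀ n, ∑ t ∈ range n, w t ≤ q) (hq : q < 1) {R : ℝ} (hR : 0 ≤ R) (hr : ∀ n, r n ≤ R)
    (hu : ∀ n, u n ≤ r n + shiftedConv w u n) (n : ℕ) : u n ≤ R / (1 - q) := by
  induction n using Nat.strong_induction_on with
  | _ n ih =>
    have hB : 0 ≤ R / (1 - q) := div_nonneg hR (by linarith)
    have hconv : shiftedConv w u n ≤ q * (R / (1 - q)) :=
      (sum_mul_le_sum_mul_of_le (fun t _ => hw t)
        fun t ht => ih _ (by simp only [Finset.mem_range] at ht; omega)).trans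
      (mul_le_mul_of_nonneg_right (hwq n) hB)
    calc u n ≤ R + q * (R / (1 - q)) := (hu n).trans (add_le_add (hr n) hconv)
      _ = R / (1 - q) := by field_simp [(by linarith : 1 - q ≠ 0)]; ring

lemma eventually_le_of_le_add_shiftedConv (hw : 0 ≤ w) (hwq : ∀ n, ∑ t ∈ range n, w t ≤ q)
    (hr : Tendsto r atTop (𝓝 0)) {B : ℝ} (hB0 : 0 ≤ B) (hB : ∀ n, u n ≤ B) {V : ℝ} (hV : 0 ≤ V)
    (huV : ∀ᶠ n in atTop, u n ≤ V) {ε : ℝ} (hε : 0 < ε)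
    (hx : ∀ n, x n ≤ r n + shiftedConv w u n) : ∀ᶠ n in atTop, x n ≤ q * V + ε := by
  have hsum : Summable w := summable_of_sum_range_le hw hwq
  obtain ⟨k, hk⟩ : ∃ k, B * ∑' j, w (j + k) < ε / 2 := by
    have htail := (tendsto_sum_nat_add w).const_mul B
    rw [mul_zero] at htail
    exact (htail.eventually (gt_mem_nhds (half_pos hε))).exists
  obtain ⟨N, hN⟩ := eventually_atTop.1 huV
  filter_upwards [hr.eventually (gt_mem_nhds (half_pos hε)), eventually_ge_atTop (N + k)]
    with n hrn hn
  have head : ∑ t ∈ range k, w t * u (n - 1 - t) ≤ q * V :=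
    (sum_mul_le_sum_mul_of_le (fun t _ => hw t)
      fun t ht => hN _ (by simp only [Finset.mem_range] at ht; omega)).trans
    (mul_le_mul_of_nonneg_right (hwq k) hV)
  have tail : ∑ t ∈ Ico k n, w t * u (n - 1 - t) ≤ B * ∑' j, w (j + k) := by
    refine (sum_mul_le_sum_mul_of_le (fun t _ => hw t) fun t _ => hB _).trans ?_
    rw [mul_comm, sum_Ico_eq_sum_range]
    refine mul_le_mul_of_nonneg_left ?_ hB0
    simp_rw [add_comm k]
    exact ((summable_nat_add_iff k).2 hsum).sum_le_tsum _ fun j _ => hw _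
  have hsplit := sum_range_add_sum_Ico (fun t => w t * u (n - 1 - t)) (by omega : k ≤ n)
  have := hx n
  rw [shiftedConv, ← hsplit] at this
  linarith

lemma tendsto_zero_of_le_add_shiftedConv_self (hu0 : 0 ≤ u) (hw : 0 ≤ w)
    (hwq : ∀ n, ∑ t ∈ range n, w t ≤ q) (hq : q < 1) (hr : Tendsto r atTop (𝓝 0))
    (hu : ∀ n, u n ≤ r n + shiftedConv w u n) : Tendsto u atTop (𝓝 0) := by
  have hq0 : 0 ≤ q := by simpa using hwq 0
  obtain ⟨R, hR⟩ := hr.bddAbove_range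
  set B := max R 0 / (1 - q)
  have hB0 : 0 ≤ B := div_nonneg (le_max_right _ _) (by linarith)
  have hB : ∀ n, u n ≤ B := le_div_one_sub_of_le_add_shiftedConv_self hw hwq hq
    (le_max_right _ _) (fun n => (hR ⟨n, rfl⟩).trans (le_max_left _ _)) hu
  -- each application of the renewal inequality contracts the eventual bound by `q`
  have hcontract : ∀ ε > 0, ∀ j : ℕ, ∀ᶠ n in atTop, u n ≤ q ^ j * B + ε := by
    intro ε hε j
    induction j with
    | zero => exact Eventually.of_forall fun n => by linarith [hB n]
    | succ j ih =>
      have hV : 0 ≤ q ^ j * B + ε := by positivity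
      filter_upwards [eventually_le_of_le_add_shiftedConv hw hwq hr hB0 hB hV ih
        (mul_pos (by linarith : 0 < 1 - q) hε) hu] with n hn
      have hq' : q ^ (j + 1) * B = q * (q ^ j * B) := by ring
      linarith
  refine tendsto_zero_of_nonneg_of_eventually_le hu0 fun ε hε => ?_
  have hpow := (tendsto_pow_atTop_nhds_zero_of_lt_one hq0 hq).mul_const B
  rw [zero_mul] at hpow
  obtain ⟨j, hj⟩ := (hpow.eventually (gt_mem_nhds (half_pos hε))).exists
  filter_upwards [hcontract (ε / 2) (half_pos hε) j] with n hn
  linarith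

lemma tendsto_zero_of_le_add_shiftedConv (hx0 : 0 ≤ x) (hw : 0 ≤ w)
    (hwq : ∀ n, ∑ t ∈ range n, w t ≤ q) (hq : q ≤ 1) (hr : Tendsto r atTop (𝓝 0))
    (hu : Tendsto u atTop (𝓝 0)) (hx : ∀ n, x n ≤ r n + shiftedConv w u n) :
    Tendsto x atTop (𝓝 0) := by
  obtain ⟨B, hB⟩ := hu.bddAbove_range
  refine tendsto_zero_of_nonneg_of_eventually_le hx0 fun ε hε => ?_
  filter_upwards [eventually_le_of_le_add_shiftedConv hw hwq hr (le_max_right B 0)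
    (fun n => (hB ⟨n, rfl⟩).trans (le_max_left _ _)) (half_pos hε).le
    (hu.eventually (eventually_le_nhds (half_pos hε))) (half_pos hε) hx] with n hn
  nlinarith

end Renewal

lemma List.finite_setOf_length_eq_forall_mem {α : Type*} {s : Set α} (hs : s.Finite) (n : ℕ) :
    {w : List α | w.length = n ∧ ∀ b ∈ w, b ∈ s}.Finite := by
  have := hs.to_subtype
  refine ((List.finite_length_eq s n).image (List.map Subtype.val)).subset ?_
  rintro w ⟨hl, hw⟩
  lift w to List s using hw
  exact ⟨w, by simpa using hl, rfl⟩

lemma preimage_affine_Ico {β : ℝ} (hβ : 0 < β) (b m : ℝ) :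
    (fun x => β * x - b) ⁻¹' Ico 0 (β * m - b) = Ico (b / β) m := by
  ext x
  simp only [mem_preimage, mem_Ico, sub_nonneg, sub_lt_sub_iff_right, div_le_iff₀ hβ,
    mul_lt_mul_iff_right₀ hβ, mul_comm x]

lemma volume_preimage_affine {β : ℝ} (hβ : 0 < β) (b : ℝ) (s : Set ℝ) :
    volume ((fun x => β * x - b) ⁻¹' s) = ENNReal.ofReal β⁻¹ * volume s := by
  have : (fun x => β * x - b) ⁻¹' s = (fun x => β * x) ⁻¹' ((fun y => y + -b) ⁻¹' s) := by
    ext; simp [sub_eq_add_neg]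
  rw [this, Real.volume_preimage_mul_left hβ.ne', measure_preimage_add_right,
    abs_of_pos (inv_pos.2 hβ)]

lemma sum_div_pow_add_iterate_div_pow {β : ℝ} (hβ : β ≠ 0) (d : ℝ → ℝ) (c : ℝ) (n : ℕ) :
    ∑ t ∈ Finset.range n, d ((fun x => β * x - d x)^[t] c) / β ^ (t + 1) +
      (fun x => β * x - d x)^[n] c / β ^ n = c := by
  induction n with
  | zero => simp
  | succ n ih =>
    set y := (fun x => β * x - d x)^[n] c
    have hstep : d y / β ^ (n + 1) + (β * y - d y) / β ^ (n + 1) = y / β ^ n := by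
      field_simp
      ring
    rw [Finset.sum_range_succ, Function.iterate_succ_apply', add_assoc, hstep, ih]

namespace GreedyDeleted

variable {β a₁ a₂ : ℝ}

structure Admissible (β a₁ a₂ : ℝ) : Prop where
  one_lt_β : 1 < β
  a₁_pos : 0 < a₁
  a₁_lt_a₂ : a₁ < a₂
  a₂_lt_two_mul : a₂ < 2 * a₁
  a₂_lt_β_mul : a₂ < β * a₁
  sub_one_mul_lt : (β - 1) * a₁ < a₂

lemma Admissible.of_condition6 (hβ : 1 < β) (ha₁ : 0 < a₁) (h12 : a₁ < a₂)
    (hc : condition6 β a₁ a₂) : Admissible β a₁ a₂ := by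
  obtain ⟨hlo, hhi⟩ := hc
  have h2 := mul_le_mul_of_nonneg_left (min_le_left 2 β) ha₁.le
  have hβ' := mul_le_mul_of_nonneg_left (min_le_right 2 β) ha₁.le
  have hβ1 := mul_le_mul_of_nonneg_left (le_max_left (β - 1) 1) ha₁.le
  exact ⟨hβ, ha₁, h12, by linarith, by linarith, by linarith⟩

lemma Admissible.β_pos (h : Admissible β a₁ a₂) : 0 < β := zero_lt_one.trans h.one_lt_β

lemma Admissible.a₂_pos (h : Admissible β a₁ a₂) : 0 < a₂ := h.a₁_pos.trans h.a₁_lt_a₂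

lemma Admissible.div_le_div (h : Admissible β a₁ a₂) : a₁ / β ≤ a₂ / β :=
  div_le_div_of_nonneg_right h.a₁_lt_a₂.le h.β_pos.le

noncomputable def digitEnd (β a₁ a₂ b : ℝ) : ℝ :=
  if b = 0 then a₁ / β else if b = a₁ then a₂ / β else a₁

lemma digitInt_eq_Ico (h : Admissible β a₁ a₂) {b : ℝ} (hb : b = 0 ∨ b = a₁ ∨ b = a₂) :
    digitInt β a₁ a₂ b = Ico (b / β) (digitEnd β a₁ a₂ b) := by
  rcases hb with rfl | rfl | rfl
  · simp [digitInt, digitEnd]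
  · simp [digitInt, digitEnd, h.a₁_pos.ne']
  · simp [digitInt, digitEnd, h.a₂_pos.ne', h.a₁_lt_a₂.ne']

lemma eqOn_greedyT (h : Admissible β a₁ a₂) {b : ℝ} (hb : b = 0 ∨ b = a₁ ∨ b = a₂) :
    EqOn (greedyT β a₁ a₂) (fun x => β * x - b) (digitInt β a₁ a₂ b) := by
  intro x hx
  rw [digitInt_eq_Ico h hb] at hx
  rcases hb with rfl | rfl | rfl <;>
    simp only [digitEnd, if_pos, if_neg h.a₁_pos.ne', if_neg h.a₂_pos.ne', if_neg h.a₁_lt_a₂.ne',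
      zero_div] at hx
  · simp [greedyT, hx.2]
  · simp [greedyT, hx.2, not_lt.2 hx.1]
  · simp [greedyT, not_lt.2 hx.1, not_lt.2 (h.div_le_div.trans hx.1)]

lemma digitInt_subset (h : Admissible β a₁ a₂) (b : ℝ) : digitInt β a₁ a₂ b ⊆ Ico 0 a₁ := by
  have hβ := h.β_pos
  unfold digitInt
  split_ifs
  · exact Ico_subset_Ico le_rfl (div_le_self h.a₁_pos.le h.one_lt_β.le)
  · exact Ico_subset_Ico (div_nonneg h.a₁_pos.le hβ.le) ((div_le_iff₀ hβ).2 (by linarith [h.a₂_lt_β_mul]))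
  · exact Ico_subset_Ico (by have := h.a₂_pos; positivity) le_rfl

lemma mem_cyl {w : List ℝ} {x : ℝ} :
    x ∈ cyl β a₁ a₂ w ↔
      ∀ k < w.length, (greedyT β a₁ a₂)^[k] x ∈ digitInt β a₁ a₂ (w.getD k 0) := by
  simp [cyl]

lemma cyl_nil : cyl β a₁ a₂ [] = univ := by
  simp [cyl]

lemma cyl_cons (b : ℝ) (w : List ℝ) :
    cyl β a₁ a₂ (b :: w) = digitInt β a₁ a₂ b ∩ greedyT β a₁ a₂ ⁻¹' cyl β a₁ a₂ w := by
  ext x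
  simp only [mem_cyl, List.length_cons, Nat.forall_lt_succ_left, mem_inter_iff, Set.mem_preimage,
    Function.iterate_succ_apply, Function.iterate_zero_apply, List.getD_cons_zero,
    List.getD_cons_succ]

lemma cyl_subset (h : Admissible β a₁ a₂) {w : List ℝ} (hw : w ≠ []) :
    cyl β a₁ a₂ w ⊆ Ico 0 a₁ := by
  obtain ⟨b, w, rfl⟩ := List.exists_cons_of_ne_nil hw
  rw [cyl_cons]
  exact inter_subset_left.trans (digitInt_subset h b)

def cylFrom (β a₁ a₂ c : ℝ) (w : List ℝ) : Set ℝ := Ico 0 c ∩ cyl β a₁ a₂ w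

lemma cylFrom_nil (c : ℝ) : cylFrom β a₁ a₂ c [] = Ico 0 c := by
  rw [cylFrom, cyl_nil, inter_univ]

lemma cylFrom_eq_cyl (h : Admissible β a₁ a₂) {w : List ℝ} (hw : w ≠ []) :
    cylFrom β a₁ a₂ a₁ w = cyl β a₁ a₂ w :=
  inter_eq_right.2 (cyl_subset h hw)

lemma cylFrom_cons (h : Admissible β a₁ a₂) {b : ℝ} (hb : b = 0 ∨ b = a₁ ∨ b = a₂) (c : ℝ)
    (w : List ℝ) :
    cylFrom β a₁ a₂ c (b :: w) =
      (fun x => β * x - b) ⁻¹' cylFrom β a₁ a₂ (β * min c (digitEnd β a₁ a₂ b) - b) w := by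
  have hb0 : 0 ≤ b / β := by
    rcases hb with rfl | rfl | rfl
    · simp
    · exact div_nonneg h.a₁_pos.le h.β_pos.le
    · exact div_nonneg h.a₂_pos.le h.β_pos.le
  have hI : Ico 0 c ∩ digitInt β a₁ a₂ b = Ico (b / β) (min c (digitEnd β a₁ a₂ b)) := by
    rw [digitInt_eq_Ico h hb, Ico_inter_Ico, max_eq_right hb0]
  have hT := (eqOn_greedyT h hb).mono (hI ▸ inter_subset_right (s := Ico 0 c))
  rw [cylFrom, cyl_cons, ← inter_assoc, hI, hT.inter_preimage_eq, cylFrom, preimage_inter,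
    preimage_affine_Ico h.β_pos]

lemma volume_cylFrom_cons (h : Admissible β a₁ a₂) {b : ℝ} (hb : b = 0 ∨ b = a₁ ∨ b = a₂)
    (c : ℝ) (w : List ℝ) :
    volume (cylFrom β a₁ a₂ c (b :: w)) =
      ENNReal.ofReal β⁻¹ * volume (cylFrom β a₁ a₂ (β * min c (digitEnd β a₁ a₂ b) - b) w) := by
  rw [cylFrom_cons h hb, volume_preimage_affine h.β_pos]

/-- The words counted by `κ(n)`, with `[0, a₁)` replaced by `[0, c)`. -/
def nonFullWords (β a₁ a₂ c : ℝ) (n : ℕ) : Set (List ℝ) :=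
  {w | w.length = n ∧ isWord a₁ a₂ w ∧ 0 < volume (cylFrom β a₁ a₂ c w) ∧
    ∀ w' : List ℝ, w' ≠ [] → w' <+: w →
      volume (cylFrom β a₁ a₂ c w') ≠ ENNReal.ofReal (a₁ / β ^ w'.length)}

noncomputable def kappaFrom (β a₁ a₂ c : ℝ) (n : ℕ) : ℕ := (nonFullWords β a₁ a₂ c n).ncard

lemma finite_nonFullWords (c : ℝ) (n : ℕ) : (nonFullWords β a₁ a₂ c n).Finite :=
  (List.finite_setOf_length_eq_forall_mem (toFinite {0, a₁, a₂}) n).subset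
    fun _ hw => ⟨hw.1, hw.2.1⟩

lemma kappaFrom_zero_le_one (c : ℝ) : kappaFrom β a₁ a₂ c 0 ≤ 1 := by
  have : nonFullWords β a₁ a₂ c 0 ⊆ {[]} := fun w hw => List.length_eq_zero_iff.1 hw.1
  simpa [kappaFrom] using ncard_le_ncard this

lemma pos_of_mem_nonFullWords {c : ℝ} {n : ℕ} {w : List ℝ} (hw : w ∈ nonFullWords β a₁ a₂ c n) :
    0 < c := by
  obtain ⟨x, hx, -⟩ := nonempty_of_measure_ne_zero hw.2.2.1.ne'
  exact hx.1.trans_lt hx.2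

lemma mem_nonFullWords_of_cons (h : Admissible β a₁ a₂) {c b : ℝ} {n : ℕ} {t : List ℝ}
    (hw : b :: t ∈ nonFullWords β a₁ a₂ c (n + 1)) :
    t ∈ nonFullWords β a₁ a₂ (β * min c (digitEnd β a₁ a₂ b) - b) n := by
  obtain ⟨hlen, hword, hpos, hfull⟩ := hw
  have hb := hword b List.mem_cons_self
  refine ⟨by simpa using hlen, fun x hx => hword x (List.mem_cons_of_mem _ hx), ?_, ?_⟩
  · rw [volume_cylFrom_cons h hb] at hpos
    exact (ENNReal.mul_pos_iff.1 hpos).2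
  · intro t' ht' hpre heq
    refine hfull (b :: t') (List.cons_ne_nil _ _) (List.cons_prefix_cons.2 ⟨rfl, hpre⟩) ?_
    rw [volume_cylFrom_cons h hb, heq, ← ENNReal.ofReal_mul (inv_nonneg.2 h.β_pos.le),
      List.length_cons, pow_succ, ← div_div, inv_mul_eq_div]

/-- The digit read first from the interval `[0, c)`: that of the points just below `c`,
hence `≤` in the middle case. -/
noncomputable def stateDigit (β a₁ a₂ c : ℝ) : ℝ :=
  if c < a₁ / β then 0 else if c ≤ a₂ / β then a₁ else a₂

noncomputable def stateMap (β a₁ a₂ c : ℝ) : ℝ := β * c - stateDigit β a₁ a₂ c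

lemma mapsTo_stateMap (h : Admissible β a₁ a₂) :
    MapsTo (stateMap β a₁ a₂) (Icc 0 a₁) (Icc 0 a₁) := by
  rintro c ⟨hc0, hc1⟩
  have hβ := h.β_pos
  have := h.a₂_lt_two_mul
  have := h.sub_one_mul_lt
  unfold stateMap stateDigit
  split_ifs with h1 h2
  · rw [lt_div_iff₀ hβ] at h1
    constructor <;> nlinarith
  · rw [not_lt, div_le_iff₀ hβ] at h1
    rw [le_div_iff₀ hβ] at h2
    constructor <;> nlinarith
  · rw [not_le, div_lt_iff₀ hβ] at h2
    constructor <;> nlinarith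

lemma volume_cylFrom_zero_of_le (h : Admissible β a₁ a₂) {c : ℝ} (hc : a₁ / β ≤ c) :
    volume (cylFrom β a₁ a₂ c [0]) = ENNReal.ofReal (a₁ / β ^ [(0 : ℝ)].length) := by
  rw [volume_cylFrom_cons h (Or.inl rfl), cylFrom_nil, Real.volume_Ico, digitEnd, if_pos rfl,
    min_eq_right hc, mul_div_cancel₀ _ h.β_pos.ne', sub_zero, sub_zero,
    ← ENNReal.ofReal_mul (inv_nonneg.2 h.β_pos.le), List.length_singleton, pow_one,
    inv_mul_eq_div]

lemma cons_mem_nonFullWords (h : Admissible β a₁ a₂) {c b : ℝ} {n : ℕ} {t : List ℝ} (hc : c ≤ a₁)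
    (hw : b :: t ∈ nonFullWords β a₁ a₂ c (n + 1)) :
    (b = stateDigit β a₁ a₂ c ∧ t ∈ nonFullWords β a₁ a₂ (stateMap β a₁ a₂ c) n) ∨
      (a₂ / β < c ∧ b = a₁ ∧ t ∈ nonFullWords β a₁ a₂ (a₂ - a₁) n) := by
  have hβ := h.β_pos
  have ht := mem_nonFullWords_of_cons h hw
  have hpos := pos_of_mem_nonFullWords ht
  rcases hw.2.1 b List.mem_cons_self with hb | hb | hb <;> subst b
  · have hc' : c < a₁ / β := by
      by_contra! hc'
      exact hw.2.2.2 [0] (List.cons_ne_nil _ _) ⟨t, rfl⟩ (volume_cylFrom_zero_of_le h hc')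
    left
    simp only [digitEnd, if_pos, min_eq_left hc'.le, sub_zero] at ht
    simpa [stateMap, stateDigit, hc'] using ht
  · simp only [digitEnd, if_neg h.a₁_pos.ne', if_pos] at ht hpos
    have hc₁ : ¬ c < a₁ / β := by
      intro hc'
      have := min_le_left c (a₂ / β)
      rw [lt_div_iff₀ hβ] at hc'
      nlinarith
    by_cases hc₂ : c ≤ a₂ / β
    · left
      rw [min_eq_left hc₂] at ht
      simpa [stateMap, stateDigit, hc₁, hc₂] using ht
    · right
      rw [min_eq_right (not_le.1 hc₂).le, mul_div_cancel₀ _ hβ.ne'] at ht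
      exact ⟨not_le.1 hc₂, rfl, ht⟩
  · simp only [digitEnd, if_neg h.a₂_pos.ne', if_neg h.a₁_lt_a₂.ne', min_eq_left hc] at ht hpos
    have hc₂ : a₂ / β < c := by rw [div_lt_iff₀ hβ]; linarith
    left
    simpa [stateMap, stateDigit, not_lt.2 (h.div_le_div.trans hc₂.le), not_le.2 hc₂] using ht

lemma kappaFrom_succ_le (h : Admissible β a₁ a₂) {c : ℝ} (hc : c ≤ a₁) (n : ℕ) :
    kappaFrom β a₁ a₂ c (n + 1) ≤ kappaFrom β a₁ a₂ (stateMap β a₁ a₂ c) n +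
      if a₂ / β < c then kappaFrom β a₁ a₂ (a₂ - a₁) n else 0 := by
  set S := List.cons (stateDigit β a₁ a₂ c) '' nonFullWords β a₁ a₂ (stateMap β a₁ a₂ c) n
  set S' := if a₂ / β < c then List.cons a₁ '' nonFullWords β a₁ a₂ (a₂ - a₁) n else ∅
  have hsub : nonFullWords β a₁ a₂ c (n + 1) ⊆ S ∪ S' := by
    intro w hw
    obtain ⟨b, t, rfl⟩ := List.exists_cons_of_ne_nil (List.ne_nil_of_length_eq_add_one hw.1)
    rcases cons_mem_nonFullWords h hc hw with ⟨rfl, ht⟩ | ⟨hc', rfl, ht⟩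
    · exact Or.inl ⟨t, ht, rfl⟩
    · exact Or.inr (by simpa [S', hc'] using ht)
  have hS' : S'.ncard = if a₂ / β < c then kappaFrom β a₁ a₂ (a₂ - a₁) n else 0 := by
    split_ifs <;> simp [S', *, ncard_image_of_injective _ List.cons_injective, kappaFrom]
  calc kappaFrom β a₁ a₂ c (n + 1) ≤ (S ∪ S').ncard := by
        refine ncard_le_ncard hsub (Finite.union ((finite_nonFullWords _ _).image _) ?_)
        simp only [S']
        split_ifs
        exacts [(finite_nonFullWords _ _).image _, finite_empty]
    _ ≤ S.ncard + S'.ncard := ncard_union_le S S'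
    _ = _ := by rw [hS', ncard_image_of_injective _ List.cons_injective]; rfl

lemma kappaFrom_le (h : Admissible β a₁ a₂) (n : ℕ) {c : ℝ} (hc : c ∈ Icc 0 a₁) :
    kappaFrom β a₁ a₂ c n ≤ 1 + ∑ t ∈ Finset.range n,
      if a₂ / β < (stateMap β a₁ a₂)^[t] c then kappaFrom β a₁ a₂ (a₂ - a₁) (n - 1 - t) else 0 := by
  induction n generalizing c with
  | zero => simpa using kappaFrom_zero_le_one c
  | succ n ih =>
    refine (kappaFrom_succ_le h hc.2 n).trans ?_
    rw [Finset.sum_range_succ', Function.iterate_zero_apply, Nat.add_sub_cancel, Nat.sub_zero,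
      ← add_assoc]
    refine Nat.add_le_add_right ((ih (mapsTo_stateMap h hc)).trans_eq ?_) _
    congr 1
    refine Finset.sum_congr rfl fun t ht => ?_
    rw [Function.iterate_succ_apply, (by omega : n - 1 - t = n - (t + 1))]

noncomputable def branchWeight (β a₁ a₂ c : ℝ) (t : ℕ) : ℝ :=
  if a₂ / β < (stateMap β a₁ a₂)^[t] c then (β ^ (t + 1))⁻¹ else 0

lemma branchWeight_nonneg (h : Admissible β a₁ a₂) (c : ℝ) :
    0 ≤ branchWeight β a₁ a₂ c := fun t => by
  have := h.β_pos
  unfold branchWeight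
  split_ifs <;> positivity

lemma mul_branchWeight_le (h : Admissible β a₁ a₂) (c : ℝ) (t : ℕ) :
    a₂ * branchWeight β a₁ a₂ c t ≤
      stateDigit β a₁ a₂ ((stateMap β a₁ a₂)^[t] c) / β ^ (t + 1) := by
  have := h.β_pos
  have := h.a₁_pos
  have := h.a₂_pos
  unfold branchWeight stateDigit
  split_ifs with h₁ h₂ h₃
  · linarith [h.div_le_div]
  · linarith
  · rw [div_eq_mul_inv]
  all_goals simp only [mul_zero]; positivity

lemma sum_branchWeight_le (h : Admissible β a₁ a₂) {c : ℝ} (hc : c ∈ Icc 0 a₁) (n : ℕ) :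
    ∑ t ∈ Finset.range n, branchWeight β a₁ a₂ c t ≤ a₁ / a₂ := by
  have hβ := h.β_pos
  rw [le_div_iff₀' h.a₂_pos, Finset.mul_sum]
  have horbit := ((mapsTo_stateMap h).iterate n hc).1
  have hexp : ∑ t ∈ Finset.range n, stateDigit β a₁ a₂ ((stateMap β a₁ a₂)^[t] c) / β ^ (t + 1) +
      (stateMap β a₁ a₂)^[n] c / β ^ n = c :=
    sum_div_pow_add_iterate_div_pow hβ.ne' (stateDigit β a₁ a₂) c n
  calc ∑ t ∈ Finset.range n, a₂ * branchWeight β a₁ a₂ c t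
      ≤ ∑ t ∈ Finset.range n, stateDigit β a₁ a₂ ((stateMap β a₁ a₂)^[t] c) / β ^ (t + 1) :=
        Finset.sum_le_sum fun t _ => mul_branchWeight_le h c t
    _ ≤ a₁ := by
      have : 0 ≤ (stateMap β a₁ a₂)^[n] c / β ^ n := by positivity
      linarith [hc.2]

lemma kappaFrom_div_pow_le (h : Admissible β a₁ a₂) {c : ℝ} (hc : c ∈ Icc 0 a₁) (n : ℕ) :
    (kappaFrom β a₁ a₂ c n : ℝ) / β ^ n ≤ (β ^ n)⁻¹ +
      shiftedConv (branchWeight β a₁ a₂ c)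
        (fun m => (kappaFrom β a₁ a₂ (a₂ - a₁) m : ℝ) / β ^ m) n := by
  have hβ := h.β_pos
  have hcast := Nat.cast_le (α := ℝ) |>.2 (kappaFrom_le h n hc)
  push_cast at hcast
  refine ((div_le_div_iff_of_pos_right (by positivity)).2 hcast).trans_eq ?_
  rw [add_div, one_div, shiftedConv, Finset.sum_div]
  congr 1
  refine Finset.sum_congr rfl fun t ht => ?_
  have hpow : β ^ n = β ^ (t + 1) * β ^ (n - 1 - t) := by
    rw [← pow_add]; congr 1; have := Finset.mem_range.1 ht; omega
  unfold branchWeight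
  split_ifs
  · rw [hpow, div_mul_eq_div_div_swap, div_eq_inv_mul]
  · simp

lemma tendsto_kappaFrom_div_pow (h : Admissible β a₁ a₂) :
    Tendsto (fun n => (kappaFrom β a₁ a₂ a₁ n : ℝ) / β ^ n) atTop (𝓝 0) := by
  have hβ := h.β_pos
  have hr : Tendsto (fun n : ℕ => (β ^ n)⁻¹) atTop (𝓝 0) :=
    tendsto_inv_atTop_zero.comp (tendsto_pow_atTop_atTop_of_one_lt h.one_lt_β)
  have hq : a₁ / a₂ < 1 := (div_lt_one h.a₂_pos).2 h.a₁_lt_a₂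
  have hbranch : a₂ - a₁ ∈ Icc 0 a₁ := ⟨by linarith [h.a₁_lt_a₂], by linarith [h.a₂_lt_two_mul]⟩
  have hu := tendsto_zero_of_le_add_shiftedConv_self (fun m => by positivity)
    (branchWeight_nonneg h _) (sum_branchWeight_le h hbranch) hq hr
    (kappaFrom_div_pow_le h hbranch)
  exact tendsto_zero_of_le_add_shiftedConv (fun n => by positivity) (branchWeight_nonneg h _)
    (sum_branchWeight_le h ⟨h.a₁_pos.le, le_rfl⟩) hq.le hr hu
    (kappaFrom_div_pow_le h ⟨h.a₁_pos.le, le_rfl⟩)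

lemma memB_iff (h : Admissible β a₁ a₂) {n : ℕ} {w : List ℝ} :
    memB β a₁ a₂ n w ↔ w ∈ nonFullWords β a₁ a₂ a₁ n := by
  rcases eq_or_ne w [] with rfl | hw
  · simp +contextual [memB, nonFullWords, isFull, isWord, cyl_nil, cylFrom_nil, h.a₁_pos]
  · simp only [memB, nonFullWords, isFull, mem_ofPred_eq, cylFrom_eq_cyl h hw]
    refine and_congr_right fun _ => and_congr_right fun _ => and_congr_right fun _ => ⟨?_, ?_⟩
    · rintro ⟨hfull, hpre⟩ w' hw' hpw
      rw [cylFrom_eq_cyl h hw']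
      rcases eq_or_ne w' w with rfl | hne
      exacts [hfull, hpre w' hw' hpw hne]
    · intro hpre
      refine ⟨by simpa [cylFrom_eq_cyl h hw] using hpre w hw (List.prefix_refl w),
        fun w' hw' hpw _ => ?_⟩
      simpa [cylFrom_eq_cyl h hw'] using hpre w' hw' hpw

lemma kappa_eq_kappaFrom (h : Admissible β a₁ a₂) (n : ℕ) :
    kappa β a₁ a₂ n = kappaFrom β a₁ a₂ a₁ n :=
  congrArg ncard (Set.ext fun _ => memB_iff h)

end GreedyDeleted

theorem stmt9_general (β a₁ a₂ : ℝ) (hβ1 : 1 < β)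
    (ha₁ : 0 < a₁) (h12 : a₁ < a₂) (hc : condition6 β a₁ a₂) :
    Filter.Tendsto (fun n : ℕ => (kappa β a₁ a₂ n : ℝ) / β ^ n)
      Filter.atTop (nhds 0) := by
  have h := GreedyDeleted.Admissible.of_condition6 hβ1 ha₁ h12 hc
  simpa only [GreedyDeleted.kappa_eq_kappaFrom h] using GreedyDeleted.tendsto_kappaFrom_div_pow h

/-- The sequence `κ(n)/βⁿ` tends to `0` as `n → ∞`. -/
theorem stmt9 (β a₁ a₂ : ℝ) (hβ1 : 1 < β) (hβ3 : β < 3)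
    (ha₁ : 0 < a₁) (h12 : a₁ < a₂) (hc : condition6 β a₁ a₂) :
    Filter.Tendsto (fun n : ℕ => (kappa β a₁ a₂ n : ℝ) / β ^ n)
      Filter.atTop (nhds 0) :=
  stmt9_general β a₁ a₂ hβ1 ha₁ h12 hc
end
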